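/- Let X be a compact metric space and f : X → 2^X a transitive open set-valued map. Then Ω(f) = Ω_final(f), and this set consists of exactly one equivalence class under the relation x ↭ y (x ⇝ y and y ⇝ x). -/

import Mathlib

open Metric Set

/-- n-fold relational composition: `fIter f 0 x = {x}`, `fIter f (n+1) x = ⋃ y ∈ fIter f n x, f y`. -/
def fIter {X : Type*} (f : X → Set X) : ℕ → X → Set X
  | 0, x => {x}
  | n + 1, x => ⋃ y ∈ fIter f n x, f y

/-- Image of a set under the n-fold composition. -/
def fIterS {X : Type*} (f : X → Set X) (n : ℕ) (A : Set X) : Set X :=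
  ⋃ a ∈ A, fIter f n a

/-- `x ⇝ y`: there is a finite trajectory of length ≥ 1 from `x` to `y`. -/
def Reach {X : Type*} (f : X → Set X) (x y : X) : Prop :=
  ∃ n, 1 ≤ n ∧ y ∈ fIter f n x

/-- The recurrent set `Ω(f)`. -/
def Omega {X : Type*} (f : X → Set X) : Set X := {x | Reach f x x}

/-- The final recurrent set `Ω_final(f)`. -/
def OmegaFinal {X : Type*} (f : X → Set X) : Set X :=
  {x | ∀ y, Reach f x y → Reach f y x}

/-- `f` is an open set-valued map: open graph and nonempty open connected values. -/
def IsOpenSVM {X : Type*} [TopologicalSpace X] (f : X → Set X) : Prop :=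
  IsOpen {p : X × X | p.2 ∈ f p.1} ∧ ∀ x, IsOpen (f x) ∧ IsConnected (f x)

/-- `f` is transitive. -/
def SVMTransitive {X : Type*} [TopologicalSpace X] (f : X → Set X) : Prop :=
  ∀ A B : Set X, IsOpen A → A.Nonempty → IsOpen B → B.Nonempty →
    ∃ n, 1 ≤ n ∧ (fIterS f n A ∩ B).Nonempty


/-!
Under an open map the set `{w | y ∈ f w}` is open, so transitivity lets every point `x` reach,
starting inside the open set `f x`, some `w` with `y ∈ f w`. Hence every point reaches every
point lying in some value of `f`, in particular every point of `Ω(f)`; this gives both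
`Ω(f) ⊆ Ω_final(f)` and that `Ω(f)` is a single class. Conversely a point of `Ω_final(f)`
reaches a point of the nonempty set `f x`, which reaches back.
-/

section Reachability

variable {X : Type*} (f : X → Set X)

lemma fIter_one (x : X) : fIter f 1 x = f x := by
  simp [fIter]

variable {f}

lemma mem_fIter_add {m n : ℕ} {x z y : X} (hz : z ∈ fIter f m x) (hy : y ∈ fIter f n z) :
    y ∈ fIter f (m + n) x := by
  induction n generalizing y with
  | zero =>
    rw [fIter, mem_singleton_iff] at hy
    subst hy
    exact hz
  | succ n ih =>
    simp only [fIter, mem_iUnion] at hy ⊢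
    obtain ⟨w, hw, hyw⟩ := hy
    exact ⟨w, ih hw, hyw⟩

lemma reach_of_mem {x y : X} (hy : y ∈ f x) : Reach f x y :=
  ⟨1, le_rfl, by rwa [fIter_one]⟩

lemma Reach.trans {x z y : X} (hxz : Reach f x z) (hzy : Reach f z y) : Reach f x y := by
  obtain ⟨m, hm, hz⟩ := hxz
  obtain ⟨n, hn, hy⟩ := hzy
  exact ⟨m + n, by omega, mem_fIter_add hz hy⟩

lemma Reach.exists_mem_image {x y : X} (h : Reach f x y) : ∃ w, y ∈ f w := by
  obtain ⟨n, hn, hy⟩ := h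
  obtain ⟨k, rfl⟩ := Nat.exists_eq_add_of_le' hn
  simp only [fIter, mem_iUnion] at hy
  obtain ⟨w, -, hw⟩ := hy
  exact ⟨w, hw⟩

lemma omegaFinal_subset_omega (hf : ∀ x, (f x).Nonempty) : OmegaFinal f ⊆ Omega f := by
  intro x hx
  obtain ⟨z, hz⟩ := hf x
  exact (reach_of_mem hz).trans (hx z (reach_of_mem hz))

end Reachability

section Transitive

variable {X : Type*} [TopologicalSpace X] {f : X → Set X}

lemma reach_of_mem_image (hf : IsOpenSVM f) (htrans : SVMTransitive f) (x : X) {w y : X}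
    (hy : y ∈ f w) : Reach f x y := by
  have hpre : IsOpen {w | y ∈ f w} :=
    hf.1.preimage (continuous_id.prodMk continuous_const)
  obtain ⟨n, hn, b, hb, hyb⟩ :=
    htrans (f x) {w | y ∈ f w} (hf.2 x).1 (hf.2 x).2.nonempty hpre ⟨w, hy⟩
  simp only [fIterS, mem_iUnion] at hb
  obtain ⟨a, hxa, hab⟩ := hb
  exact ((reach_of_mem hxa).trans ⟨n, hn, hab⟩).trans (reach_of_mem hyb)

lemma reach_of_mem_omega (hf : IsOpenSVM f) (htrans : SVMTransitive f) (x : X) {y : X}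
    (hy : y ∈ Omega f) : Reach f x y :=
  have ⟨_, hw⟩ := Reach.exists_mem_image hy
  reach_of_mem_image hf htrans x hw

end Transitive

theorem stmt_8_general {X : Type*} [MetricSpace X] (f : X → Set X)
    (hf : IsOpenSVM f) (htrans : SVMTransitive f) :
    Omega f = OmegaFinal f ∧
      ∀ x ∈ Omega f, ∀ y ∈ Omega f, Reach f x y ∧ Reach f y x := by
  refine ⟨subset_antisymm ?_ (omegaFinal_subset_omega fun x => (hf.2 x).2.nonempty), ?_⟩
  · exact fun x hx y _ => reach_of_mem_omega hf htrans y hx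
  · exact fun x hx y hy => ⟨reach_of_mem_omega hf htrans x hy, reach_of_mem_omega hf htrans y hx⟩

theorem stmt_8 {X : Type*} [MetricSpace X] [CompactSpace X] (f : X → Set X)
    (hf : IsOpenSVM f) (htrans : SVMTransitive f) :
    Omega f = OmegaFinal f ∧
      ∀ x ∈ Omega f, ∀ y ∈ Omega f, Reach f x y ∧ Reach f y x :=
  stmt_8_general f hf htrans
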